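/- If the data are samples of a C³ function u on a uniform grid of size h, so β₁ = (u(x_i)−u(x_{i−1}))² and β₂ = (u(x_{i+1})−u(x_i))², and if u'(x_i) ≠ 0 and ε = ε₀h⁴ for a constant ε₀ > 0, then the WENO nonlinear weights converge to the linear weights: w₁ → γ₁ and w₂ → γ₂ as h → 0 (with α̃ held fixed). -/
import Mathlib


open Filter

/-- If the data are samples of a C³ function u with u'(x) ≠ 0, and ε = ε₀h⁴,
    then the WENO nonlinear weights converge to the linear weights as h → 0⁺. -/
theorem stmt_12 (u : ℝ → ℝ) (hu : ContDiff ℝ 3 u) (x : ℝ)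
    (hu' : deriv u x ≠ 0) (ε₀ : ℝ) (hε₀ : 0 < ε₀)
    (α : ℝ) (hα : α ∈ Set.Ico (1/2 : ℝ) (3/2))
    (γ₁ γ₂ : ℝ) (hγ₁ : γ₁ = 1 - α / 2) (hγ₂ : γ₂ = α / 2)
    (β₁ β₂ w₁t w₂t w₁ w₂ : ℝ → ℝ)
    (hβ₁ : ∀ h, β₁ h = (u x - u (x - h)) ^ 2)
    (hβ₂ : ∀ h, β₂ h = (u (x + h) - u x) ^ 2)
    (h1 : ∀ h, w₁t h = γ₁ / (ε₀ * h ^ 4 + β₁ h) ^ 2)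
    (h2 : ∀ h, w₂t h = γ₂ / (ε₀ * h ^ 4 + β₂ h) ^ 2)
    (h3 : ∀ h, w₁ h = w₁t h / (w₁t h + w₂t h))
    (h4 : ∀ h, w₂ h = 1 - w₁ h) :
    Tendsto w₁ (nhdsWithin 0 (Set.Ioi 0)) (nhds γ₁) ∧
    Tendsto w₂ (nhdsWithin 0 (Set.Ioi 0)) (nhds γ₂) := by
  obtain ⟨hα1, hα2⟩ := hα
  have hγ₁p : 0 < γ₁ := by rw [hγ₁]; linarith
  have hγ₂p : 0 < γ₂ := by rw [hγ₂]; linarith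
  have hsum : γ₁ + γ₂ = 1 := by rw [hγ₁, hγ₂]; ring
  set D := deriv u x with hD
  have hdiff : HasDerivAt u D x :=
    ((hu.differentiable (by norm_num)) x).hasDerivAt
  have hslope := hasDerivAt_iff_tendsto_slope.mp hdiff
  set L := nhdsWithin (0:ℝ) (Set.Ioi 0) with hL
  have hmem : ∀ᶠ h in L, h ∈ Set.Ioi (0:ℝ) := self_mem_nhdsWithin
  have tplus : Tendsto (fun h : ℝ => x + h) L (nhdsWithin x {x}ᶜ) := by
    rw [tendsto_nhdsWithin_iff]
    constructor
    · have : Tendsto (fun h : ℝ => x + h) (nhds 0) (nhds (x + 0)) :=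
        (continuous_const.add continuous_id).tendsto 0
      simpa using this.mono_left nhdsWithin_le_nhds
    · filter_upwards [hmem] with h hh
      have : 0 < h := hh
      simp only [Set.mem_compl_iff, Set.mem_singleton_iff]
      intro e; linarith [e]
  have tminus : Tendsto (fun h : ℝ => x - h) L (nhdsWithin x {x}ᶜ) := by
    rw [tendsto_nhdsWithin_iff]
    constructor
    · have : Tendsto (fun h : ℝ => x - h) (nhds 0) (nhds (x - 0)) :=
        (continuous_const.sub continuous_id).tendsto 0
      simpa using this.mono_left nhdsWithin_le_nhds
    · filter_upwards [hmem] with h hh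
      have : 0 < h := hh
      simp only [Set.mem_compl_iff, Set.mem_singleton_iff]
      intro e; linarith [e]
  have s₂ : Tendsto (fun h => (u (x + h) - u x) / h) L (nhds D) := by
    have := hslope.comp tplus
    refine this.congr fun h => ?_
    simp only [Function.comp, slope, vsub_eq_sub, smul_eq_mul]
    ring
  have s₁ : Tendsto (fun h => (u x - u (x - h)) / h) L (nhds D) := by
    have := hslope.comp tminus
    refine this.congr fun h => ?_
    simp only [Function.comp, slope, vsub_eq_sub, smul_eq_mul]
    ring
  have h0 : Tendsto (fun h : ℝ => ε₀ * h ^ 2) L (nhds 0) := by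
    have : Tendsto (fun h : ℝ => ε₀ * h ^ 2) (nhds 0) (nhds (ε₀ * 0 ^ 2)) :=
      (continuous_const.mul (continuous_pow 2)).tendsto 0
    simpa using this.mono_left nhdsWithin_le_nhds
  have b1 : Tendsto (fun h => (ε₀ * h ^ 4 + β₁ h) / h ^ 2) L (nhds (D ^ 2)) := by
    have hb := h0.add (s₁.pow 2)
    rw [zero_add] at hb
    refine hb.congr' ?_
    filter_upwards [hmem] with h hh
    have hne : h ≠ 0 := ne_of_gt hh
    rw [hβ₁]; field_simp
  have b2 : Tendsto (fun h => (ε₀ * h ^ 4 + β₂ h) / h ^ 2) L (nhds (D ^ 2)) := by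
    have hb := h0.add (s₂.pow 2)
    rw [zero_add] at hb
    refine hb.congr' ?_
    filter_upwards [hmem] with h hh
    have hne : h ≠ 0 := ne_of_gt hh
    rw [hβ₂]; field_simp
  have DD : D ^ 2 ≠ 0 := pow_ne_zero _ hu'
  have fr : Tendsto (fun h => (ε₀ * h ^ 4 + β₁ h) / (ε₀ * h ^ 4 + β₂ h)) L (nhds 1) := by
    have hb := b1.div b2 DD
    rw [div_self DD] at hb
    refine hb.congr' ?_
    filter_upwards [hmem] with h hh
    have hne : (h : ℝ) ≠ 0 := ne_of_gt hh
    have hBne : ε₀ * h ^ 4 + β₂ h ≠ 0 := by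
      have : (0:ℝ) < ε₀ * h ^ 4 + β₂ h := by
        have hhp : 0 < h := hh
        rw [hβ₂]; positivity
      exact ne_of_gt this
    simp only [Pi.div_apply]
    field_simp
  have keyeq : ∀ᶠ h in L, w₁ h =
      γ₁ / (γ₁ + γ₂ * ((ε₀ * h ^ 4 + β₁ h) / (ε₀ * h ^ 4 + β₂ h)) ^ 2) := by
    filter_upwards [hmem] with h hh
    have hhp : 0 < h := hh
    have hA : 0 < ε₀ * h ^ 4 + β₁ h := by rw [hβ₁]; positivity
    have hB : 0 < ε₀ * h ^ 4 + β₂ h := by rw [hβ₂]; positivity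
    have hS : 0 < γ₁ * (ε₀ * h ^ 4 + β₂ h) ^ 2 + γ₂ * (ε₀ * h ^ 4 + β₁ h) ^ 2 := by
      positivity
    rw [h3, h1, h2]
    rw [div_add_div _ _ (by positivity) (by positivity), div_div_div_eq]
    rw [eq_div_iff (by positivity), div_mul_eq_mul_div, div_eq_iff (by positivity)]
    field_simp
  have lim1 : Tendsto
      (fun h => γ₁ / (γ₁ + γ₂ * ((ε₀ * h ^ 4 + β₁ h) / (ε₀ * h ^ 4 + β₂ h)) ^ 2))
      L (nhds γ₁) := by
    have hden : Tendsto (fun h => γ₁ + γ₂ * ((ε₀ * h ^ 4 + β₁ h) / (ε₀ * h ^ 4 + β₂ h)) ^ 2)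
        L (nhds (γ₁ + γ₂ * 1 ^ 2)) :=
      tendsto_const_nhds.add (tendsto_const_nhds.mul (fr.pow 2))
    have hne : γ₁ + γ₂ * (1:ℝ) ^ 2 ≠ 0 := by rw [one_pow, mul_one, hsum]; norm_num
    have := Tendsto.div (tendsto_const_nhds (x := γ₁) (f := L)) hden hne
    have heq : γ₁ / (γ₁ + γ₂ * (1:ℝ) ^ 2) = γ₁ := by
      rw [one_pow, mul_one, hsum, div_one]
    rwa [heq] at this
  have tw₁ : Tendsto w₁ L (nhds γ₁) := lim1.congr' (by filter_upwards [keyeq] with h e using e.symm)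
  refine ⟨tw₁, ?_⟩
  have : Tendsto (fun h => 1 - w₁ h) L (nhds (1 - γ₁)) := tendsto_const_nhds.sub tw₁
  have heq : (1:ℝ) - γ₁ = γ₂ := by linarith
  rw [heq] at this
  exact this.congr fun h => (h4 h).symm
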